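/- For every integer n ≥ 1 and every x > 0, the ratio of modified Bessel functions of the first kind satisfies x/(n - 1/2 + √((n+1/2)² + x²)) < I_n(x)/I_{n-1}(x) < x/(n - 1 + √((n+1)² + x²)). -/

import Mathlib

/-- The modified Bessel function of the first kind of integer order `n`:
`I_n(x) = Σ_{k ≥ 0} (x/2)^{2k+n} / (k! (k+n)!)`. -/
noncomputable def besselI (n : ℕ) (x : ℝ) : ℝ :=
  ∑' k : ℕ, (x / 2) ^ (2 * k + n) / ((Nat.factorial k : ℝ) * (Nat.factorial (k + n) : ℝ))

open Finset

namespace BesselAux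

noncomputable def bT (n : ℕ) (x : ℝ) (k : ℕ) : ℝ :=
  (x / 2) ^ (2 * k + n) / ((Nat.factorial k : ℝ) * (Nat.factorial (k + n) : ℝ))

noncomputable def bC (m n : ℕ) (x : ℝ) (p : ℕ) : ℝ :=
  (x/2)^(2*p+(m+n)) *
    ((2*p+(m+n)).factorial /
      ((p.factorial : ℝ) * (p+m).factorial * (p+n).factorial * (p+(m+n)).factorial))

lemma besselI_eq (n : ℕ) (x : ℝ) : besselI n x = ∑' k, bT n x k := rfl

lemma bT_nonneg (n : ℕ) {x : ℝ} (hx : 0 ≤ x) (k : ℕ) : 0 ≤ bT n x k := by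
  unfold bT; positivity

lemma bT_pos (n : ℕ) {x : ℝ} (hx : 0 < x) (k : ℕ) : 0 < bT n x k := by
  unfold bT; positivity

lemma fact_cast_pos (m : ℕ) : (0:ℝ) < (Nat.factorial m : ℝ) := by
  exact_mod_cast Nat.factorial_pos m

lemma summable_bT (n : ℕ) (x : ℝ) : Summable (bT n x) := by
  have h1 : Summable (fun k : ℕ => |x / 2| ^ n * ((|x / 2| ^ 2) ^ k / (Nat.factorial k : ℝ))) :=
    (Real.summable_pow_div_factorial ((|x / 2|) ^ 2)).mul_left (|x / 2| ^ n)
  refine Summable.of_norm (h1.of_nonneg_of_le (fun k => norm_nonneg _) (fun k => ?_))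
  have h2 : (1:ℝ) ≤ (Nat.factorial (k + n) : ℝ) := by
    exact_mod_cast Nat.one_le_iff_ne_zero.mpr (Nat.factorial_pos (k+n)).ne'
  have h3 : (0:ℝ) < (Nat.factorial k : ℝ) := fact_cast_pos k
  have hnorm : ‖bT n x k‖ = |x/2| ^ (2*k+n) / ((Nat.factorial k : ℝ) * (Nat.factorial (k + n) : ℝ)) := by
    unfold bT
    rw [Real.norm_eq_abs, abs_div, abs_pow, abs_of_pos (mul_pos (fact_cast_pos k) (fact_cast_pos (k+n)))]
  rw [hnorm, pow_add, pow_mul]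
  rw [div_le_iff₀ (by positivity)]
  calc (|x/2| ^ 2) ^ k * |x/2| ^ n
      = (|x/2| ^ n * ((|x/2| ^ 2) ^ k / (Nat.factorial k : ℝ))) * ((Nat.factorial k : ℝ) * 1) := by
        field_simp
    _ ≤ (|x/2| ^ n * ((|x/2| ^ 2) ^ k / (Nat.factorial k : ℝ))) * ((Nat.factorial k : ℝ) * (Nat.factorial (k+n) : ℝ)) := by
        have hc : (0:ℝ) ≤ |x/2| ^ n * ((|x/2| ^ 2) ^ k / (Nat.factorial k : ℝ)) := by positivity
        have := mul_le_mul_of_nonneg_left (mul_le_mul_of_nonneg_left h2 h3.le) hc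
        simpa using this

lemma besselI_pos (n : ℕ) {x : ℝ} (hx : 0 < x) : 0 < besselI n x := by
  have h := Summable.le_tsum (summable_bT n x) 0 (fun j _ => bT_nonneg n hx.le j)
  calc (0:ℝ) < bT n x 0 := bT_pos n hx 0
    _ ≤ besselI n x := h

lemma bT_rec0 (n : ℕ) (x : ℝ) :
    x * bT n x 0 - (2*(n:ℝ)+2) * bT (n+1) x 0 = 0 := by
  unfold bT
  simp only [Nat.mul_zero, Nat.zero_add, Nat.factorial_zero, Nat.cast_one, one_mul]
  have h1 : ((n+1).factorial : ℝ) = (n+1) * n.factorial := by exact_mod_cast Nat.factorial_succ n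
  rw [pow_succ, h1]
  have f1 := fact_cast_pos n
  have g1 : ((n:ℝ)+1) ≠ 0 := by positivity
  field_simp
  ring

lemma bT_rec (n : ℕ) (x : ℝ) (k : ℕ) :
    x * bT n x (k+1) - (2*(n:ℝ)+2) * bT (n+1) x (k+1) = x * bT (n+2) x k := by
  unfold bT
  have e1 : 2*(k+1)+n = 2*k+n+2 := by ring
  have e2 : 2*(k+1)+(n+1) = (2*k+n+2)+1 := by ring
  have e3 : 2*k+(n+2) = 2*k+n+2 := by ring
  have e4 : (k+1)+n = k+n+1 := by ring
  have e5 : (k+1)+(n+1) = k+n+2 := by ring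
  have e6 : k+(n+2) = k+n+2 := by ring
  rw [e1, e2, e3, e4, e5, e6]
  have h1 : ((k+1).factorial : ℝ) = ((k:ℝ)+1) * k.factorial := by
    push_cast [Nat.factorial_succ k]; ring
  have h2 : ((k+n+2).factorial : ℝ) = ((k:ℝ)+n+2) * (k+n+1).factorial := by
    have : (k+n+2).factorial = (k+n+2) * (k+n+1).factorial := Nat.factorial_succ (k+n+1)
    push_cast [this]; ring
  rw [pow_succ, h1, h2]
  have f1 := fact_cast_pos k
  have f2 := fact_cast_pos (k+n+1)
  have g1 : ((k:ℝ)+1) ≠ 0 := by positivity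
  have g2 : ((k:ℝ)+n+2) ≠ 0 := by positivity
  field_simp
  ring

lemma besselI_rec (n : ℕ) (x : ℝ) :
    x * besselI n x = x * besselI (n+2) x + (2*(n:ℝ)+2) * besselI (n+1) x := by
  have hf : Summable (fun k => x * bT n x k - (2*(n:ℝ)+2) * bT (n+1) x k) :=
    ((summable_bT n x).mul_left x).sub ((summable_bT (n+1) x).mul_left _)
  have h1 : ∑' k, (x * bT n x k - (2*(n:ℝ)+2) * bT (n+1) x k)
      = x * besselI n x - (2*(n:ℝ)+2) * besselI (n+1) x := by
    rw [Summable.tsum_sub ((summable_bT n x).mul_left x) ((summable_bT (n+1) x).mul_left _),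
      tsum_mul_left, tsum_mul_left]
    rfl
  have h2 : ∑' k, (x * bT n x k - (2*(n:ℝ)+2) * bT (n+1) x k) = x * besselI (n+2) x := by
    rw [Summable.tsum_eq_zero_add hf]
    simp only [bT_rec, bT_rec0, zero_add]
    rw [tsum_mul_left]
    rfl
  have := h1.symm.trans h2
  linarith

lemma vdm (p a b : ℕ) :
    ∑ j ∈ range (p+1), p.choose j * (p+a+b).choose (j+a) = (2*p+a+b).choose (p+a) := by
  have h := Nat.add_choose_eq p (p+a+b) (p+a)
  rw [Finset.Nat.sum_antidiagonal_eq_sum_range_succ (fun i j => p.choose i * (p+a+b).choose j)] at h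
  have htr : ∑ k ∈ range (p+a+1), p.choose k * (p+a+b).choose (p+a-k)
      = ∑ k ∈ range (p+1), p.choose k * (p+a+b).choose (p+a-k) := by
    refine (Finset.sum_subset (by intro k hk; simp at hk ⊢; omega) ?_).symm
    intro k hk hk2
    simp only [mem_range] at hk hk2
    have : p < k := by omega
    rw [Nat.choose_eq_zero_of_lt this, zero_mul]
  have hre : ∑ k ∈ range (p+1), p.choose k * (p+a+b).choose (p+a-k)
      = ∑ j ∈ range (p+1), p.choose j * (p+a+b).choose (j+a) := by
    rw [← Finset.sum_range_reflect]
    refine Finset.sum_congr rfl ?_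
    intro j hj
    simp only [mem_range] at hj
    have hj' : j ≤ p := by omega
    have h1 : p + 1 - 1 - j = p - j := by omega
    have h2 : p.choose (p - j) = p.choose j := Nat.choose_symm hj'
    have h3 : p + a - (p - j) = j + a := by omega
    rw [h1, h2, h3]
  have hcast : p + (p+a+b) = 2*p+a+b := by ring
  rw [hcast] at h
  rw [h, htr, hre]

lemma sum_bT_mul (m n : ℕ) (x : ℝ) (p : ℕ) :
    ∑ j ∈ range (p+1), bT m x j * bT n x (p-j) = bC m n x p := by
  unfold bC
  have key : ∀ j ∈ range (p+1),
      bT m x j * bT n x (p-j)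
        = (x/2)^(2*p+(m+n)) * ((p.choose j * (p+(m+n)).choose (j+m) : ℕ) : ℝ)
            / ((p.factorial : ℝ) * ((p+(m+n)).factorial : ℝ)) := by
    intro j hj
    simp only [mem_range] at hj
    have hj' : j ≤ p := by omega
    unfold bT
    have hexp : (2*j+m) + (2*(p-j)+n) = 2*p+(m+n) := by omega
    have c1 : (p.choose j * j.factorial * (p-j).factorial : ℕ) = p.factorial :=
      Nat.choose_mul_factorial_mul_factorial hj'
    have hle : j + m ≤ p + (m+n) := by omega
    have c2 : ((p+(m+n)).choose (j+m) * (j+m).factorial * ((p-j)+n).factorial : ℕ)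
        = (p+(m+n)).factorial := by
      have h0 := Nat.choose_mul_factorial_mul_factorial hle
      have h4 : p + (m+n) - (j+m) = (p-j)+n := by omega
      rwa [h4] at h0
    have key2 : (p.choose j * (p+(m+n)).choose (j+m)) *
        (j.factorial * (j+m).factorial * ((p-j).factorial * ((p-j)+n).factorial))
        = p.factorial * (p+(m+n)).factorial := by
      calc (p.choose j * (p+(m+n)).choose (j+m)) *
            (j.factorial * (j+m).factorial * ((p-j).factorial * ((p-j)+n).factorial))
          = (p.choose j * j.factorial * (p-j).factorial) *
            ((p+(m+n)).choose (j+m) * (j+m).factorial * ((p-j)+n).factorial) := by ring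
        _ = p.factorial * (p+(m+n)).factorial := by rw [c1, c2]
    have hD2 : ((p.factorial : ℝ) * ((p+(m+n)).factorial : ℝ))
        = ((p.choose j * (p+(m+n)).choose (j+m) : ℕ) : ℝ) *
          ((j.factorial : ℝ) * ((j+m).factorial : ℝ) *
            (((p-j).factorial : ℝ) * (((p-j)+n).factorial : ℝ))) := by
      exact_mod_cast congrArg (fun t : ℕ => (t : ℝ)) key2.symm
    rw [div_mul_div_comm, ← pow_add, hexp,
      div_eq_div_iff (by positivity) (by positivity), hD2]
    ring
  rw [Finset.sum_congr rfl key, ← Finset.sum_div, ← Finset.mul_sum, ← Nat.cast_sum]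
  have hv := vdm p m n
  have e1 : p + m + n = p + (m+n) := by omega
  have e2 : 2*p + m + n = 2*p + (m+n) := by omega
  rw [e1, e2] at hv
  rw [hv]
  have hle2 : p + m ≤ 2*p+(m+n) := by omega
  have c3 : ((2*p+(m+n)).choose (p+m) * (p+m).factorial * (p+n).factorial : ℕ)
      = (2*p+(m+n)).factorial := by
    have h0 := Nat.choose_mul_factorial_mul_factorial hle2
    have h4 : 2*p+(m+n) - (p+m) = p+n := by omega
    rwa [h4] at h0
  have c3' : (((2*p+(m+n)).choose (p+m) : ℕ) : ℝ) * ((p+m).factorial : ℝ) * ((p+n).factorial : ℝ)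
      = ((2*p+(m+n)).factorial : ℝ) := by exact_mod_cast congrArg (fun t : ℕ => (t : ℝ)) c3
  rw [mul_div_assoc]
  congr 1
  rw [div_eq_div_iff (by positivity) (by positivity)]
  linear_combination ((p.factorial : ℝ) * ((p+(m+n)).factorial : ℝ)) * c3'

lemma summable_norm_bT (n : ℕ) (x : ℝ) : Summable (fun k => ‖bT n x k‖) := by
  simpa [Real.norm_eq_abs] using (summable_bT n x).abs

lemma besselI_mul (m n : ℕ) (x : ℝ) :
    besselI m x * besselI n x = ∑' p, bC m n x p := by
  rw [besselI_eq, besselI_eq]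
  refine (tsum_mul_tsum_eq_tsum_sum_range_of_summable_norm
    (summable_norm_bT m x) (summable_norm_bT n x)).trans (tsum_congr fun p => ?_)
  exact sum_bT_mul m n x p

lemma summable_bC (m n : ℕ) (x : ℝ) : Summable (bC m n x) := by
  refine ((summable_norm_sum_mul_range_of_summable_norm
    (summable_norm_bT m x) (summable_norm_bT n x)).of_norm).congr (fun p => ?_)
  exact sum_bT_mul m n x p

lemma frac_ineq (F A P Q R a b c : ℝ) (hF : 0 < F) (hA : 0 < A) (hP : 0 < P) (hQ : 0 < Q)
    (hR : 0 < R) (ha : 0 < a) (hb : 0 < b) (hc : 2*b ≤ c) :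
    2*F*(A/(P*(a*Q)*(a*Q)*R) - A/(P*Q*((a+1)*(a*Q))*R)) ≤ F*((c*A)/((b*P)*(a*Q)*((a+1)*(a*Q))*R)) := by
  have ha1 : (0:ℝ) < a + 1 := by linarith
  have h1 : A/(P*(a*Q)*(a*Q)*R) - A/(P*Q*((a+1)*(a*Q))*R) = A/(P*Q*Q*R*a*a*(a+1)) := by
    rw [div_sub_div _ _ (by positivity) (by positivity), div_eq_div_iff (by positivity) (by positivity)]
    ring
  have h2 : F*((c*A)/((b*P)*(a*Q)*((a+1)*(a*Q))*R)) = (F*c*A)/(b*(P*Q*Q*R*a*a*(a+1))) := by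
    rw [mul_div_assoc']
    rw [div_eq_div_iff (by positivity) (by positivity)]
    ring
  rw [h1, h2, mul_div_assoc', div_le_div_iff₀ (by positivity) (by positivity)]
  have hD : (0:ℝ) < P*Q*Q*R*a*a*(a+1) := by positivity
  nlinarith [mul_le_mul_of_nonneg_left hc (le_of_lt (mul_pos (mul_pos hF hA) hD))]

lemma coeff_ineq (m p : ℕ) (x : ℝ) (hx : 0 < x) :
    x * (bC (m+1) (m+1) x p - bC m (m+2) x p) ≤ bC m (m+1) x (p+1) := by
  set P : ℝ := (p.factorial : ℝ) with hP
  set Q : ℝ := ((p+m).factorial : ℝ) with hQdef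
  set R : ℝ := ((p+2*m+2).factorial : ℝ) with hR
  set A : ℝ := ((2*p+2*m+2).factorial : ℝ) with hA
  set a : ℝ := (p:ℝ)+m+1 with hadef
  set b : ℝ := (p:ℝ)+1 with hbdef
  set c : ℝ := 2*(p:ℝ)+2*m+3 with hcdef
  have hQ1 : (((p+m+1).factorial : ℕ) : ℝ) = a * Q := by
    have : (p+m+1).factorial = (p+m+1) * (p+m).factorial := Nat.factorial_succ (p+m)
    rw [this]; push_cast [hadef, hQdef]; ring
  have hQ2 : (((p+m+2).factorial : ℕ) : ℝ) = (a+1) * (a*Q) := by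
    have h' : (p+m+2).factorial = (p+m+2) * (p+m+1).factorial := Nat.factorial_succ (p+m+1)
    rw [h', Nat.cast_mul, hQ1]; push_cast [hadef]; ring
  have hA1 : (((2*p+2*m+3).factorial : ℕ) : ℝ) = c * A := by
    have h' : (2*p+2*m+3).factorial = (2*p+2*m+3) * (2*p+2*m+2).factorial :=
      Nat.factorial_succ (2*p+2*m+2)
    rw [h']; push_cast [hcdef, hA]; ring
  have hP1 : (((p+1).factorial : ℕ) : ℝ) = b * P := by
    have h' : (p+1).factorial = (p+1) * p.factorial := Nat.factorial_succ p
    rw [h']; push_cast [hbdef, hP]; ring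
  have E1 : bC (m+1) (m+1) x p = (x/2)^(2*p+2*m+2) * (A/(P*(a*Q)*(a*Q)*R)) := by
    unfold bC
    have e1 : 2*p+((m+1)+(m+1)) = 2*p+2*m+2 := by ring
    have e2 : p+(m+1) = p+m+1 := by ring
    have e3 : p+((m+1)+(m+1)) = p+2*m+2 := by ring
    rw [e1, e2, e3, hQ1]
  have E2 : bC m (m+2) x p = (x/2)^(2*p+2*m+2) * (A/(P*Q*((a+1)*(a*Q))*R)) := by
    unfold bC
    have e1 : 2*p+(m+(m+2)) = 2*p+2*m+2 := by ring
    have e2 : p+(m+2) = p+m+2 := by ring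
    have e3 : p+(m+(m+2)) = p+2*m+2 := by ring
    rw [e1, e2, e3, hQ2]
  have E3 : bC m (m+1) x (p+1) = (x/2)^(2*p+2*m+3) * ((c*A)/((b*P)*(a*Q)*((a+1)*(a*Q))*R)) := by
    unfold bC
    have e1 : 2*(p+1)+(m+(m+1)) = 2*p+2*m+3 := by ring
    have e2 : (p+1)+m = p+m+1 := by ring
    have e3 : (p+1)+(m+1) = p+m+2 := by ring
    have e4 : (p+1)+(m+(m+1)) = p+2*m+2 := by ring
    rw [e1, e2, e3, e4, hQ1, hQ2, hA1, hP1]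
  have hxF : x * (x/2)^(2*p+2*m+2) = 2*(x/2)^(2*p+2*m+3) := by
    rw [pow_succ]; ring
  have hFpos : (0:ℝ) < (x/2)^(2*p+2*m+3) := by positivity
  have hbc : 2*b ≤ c := by
    have hm : (0:ℝ) ≤ (m:ℝ) := Nat.cast_nonneg m
    have hp : (0:ℝ) ≤ (p:ℝ) := Nat.cast_nonneg p
    rw [hbdef, hcdef]
    linarith
  have hkey := frac_ineq ((x/2)^(2*p+2*m+3)) A P Q R a b c hFpos
    (by rw [hA]; exact fact_cast_pos _) (by rw [hP]; exact fact_cast_pos _)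
    (by rw [hQdef]; exact fact_cast_pos _) (by rw [hR]; exact fact_cast_pos _)
    (by rw [hadef]; positivity) (by rw [hbdef]; positivity) hbc
  calc x * (bC (m+1) (m+1) x p - bC m (m+2) x p)
      = 2*((x/2)^(2*p+2*m+3))*(A/(P*(a*Q)*(a*Q)*R) - A/(P*Q*((a+1)*(a*Q))*R)) := by
        rw [E1, E2, ← mul_sub, ← mul_assoc, hxF]
    _ ≤ (x/2)^(2*p+2*m+3) * ((c*A)/((b*P)*(a*Q)*((a+1)*(a*Q))*R)) := hkey
    _ = bC m (m+1) x (p+1) := E3.symm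

lemma bC_pos (m n : ℕ) {x : ℝ} (hx : 0 < x) (p : ℕ) : 0 < bC m n x p := by
  unfold bC
  have h1 := fact_cast_pos (2*p+(m+n))
  have h2 := fact_cast_pos p
  have h3 := fact_cast_pos (p+m)
  have h4 := fact_cast_pos (p+n)
  have h5 := fact_cast_pos (p+(m+n))
  positivity

lemma turan (m : ℕ) (x : ℝ) (hx : 0 < x) :
    x * (besselI (m+1) x * besselI (m+1) x)
      < besselI m x * besselI (m+1) x + x * (besselI m x * besselI (m+2) x) := by
  rw [besselI_mul, besselI_mul, besselI_mul]
  have hsum1 := summable_bC (m+1) (m+1) x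
  have hsum2 := summable_bC m (m+2) x
  have hsum3 := summable_bC m (m+1) x
  have hL : x * (∑' p, bC (m+1) (m+1) x p) - x * (∑' p, bC m (m+2) x p)
      = ∑' p, (x * (bC (m+1) (m+1) x p - bC m (m+2) x p)) := by
    rw [← tsum_mul_left, ← tsum_mul_left, ← Summable.tsum_sub (hsum1.mul_left x) (hsum2.mul_left x)]
    exact tsum_congr fun p => by ring
  have hR : (∑' p, bC m (m+1) x p) = bC m (m+1) x 0 + ∑' p, bC m (m+1) x (p+1) :=
    Summable.tsum_eq_zero_add hsum3
  have hle : ∑' p, (x * (bC (m+1) (m+1) x p - bC m (m+2) x p)) ≤ ∑' p, bC m (m+1) x (p+1) := by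
    refine Summable.tsum_le_tsum (fun p => coeff_ineq m p x hx) ?_ ?_
    · exact ((hsum1.sub hsum2).mul_left x).congr (fun p => by ring)
    · exact (summable_nat_add_iff 1).mpr hsum3
  have h0 : 0 < bC m (m+1) x 0 := bC_pos m (m+1) hx 0
  linarith

lemma lower_aux (ν : ℕ) (x : ℝ) (hx : 0 < x) :
    x * besselI ν x
      < ((ν:ℝ)+1/2 + Real.sqrt (((ν:ℝ)+3/2)^2+x^2)) * besselI (ν+1) x := by
  set N : ℝ := (ν:ℝ) + 1 with hN
  have hN1 : 1 ≤ N := by rw [hN]; have := Nat.cast_nonneg (α := ℝ) ν; linarith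
  set a : ℝ := besselI ν x with hadef
  set bb : ℝ := besselI (ν+1) x with hbdef
  set c : ℝ := besselI (ν+2) x with hcdef
  set d : ℝ := besselI (ν+3) x with hddef
  have ha : 0 < a := besselI_pos ν hx
  have hb : 0 < bb := besselI_pos (ν+1) hx
  have hcpos : 0 < c := besselI_pos (ν+2) hx
  have hP1 : x * a = x * c + (2*N) * bb := by
    have := besselI_rec ν x
    rw [← hadef, ← hbdef, ← hcdef] at this
    rw [hN]; linarith
  have hP2 : x * bb = x * d + (2*N+2) * c := by
    have := besselI_rec (ν+1) x
    have e1 : ν+1+2 = ν+3 := rfl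
    have e2 : ν+1+1 = ν+2 := rfl
    rw [e1, e2, ← hbdef, ← hcdef, ← hddef] at this
    rw [hN]; push_cast at this ⊢; linarith
  have hT := turan (ν+1) x hx
  have e1 : ν+1+1 = ν+2 := rfl
  have e2 : ν+1+2 = ν+3 := rfl
  rw [e1, e2, ← hbdef, ← hcdef, ← hddef] at hT
  have hid : (2*N+x^2)*bb^2 + (2*N-1)*(x*(bb*a)) - x^2*a^2
      = x*(bb*c) + x^2*(bb*d) - x^2*(c*c) := by
    linear_combination (x*bb) * hP2 + ((2*N-1)*bb - (x*a - x*c - 2*N*bb) - 2*x*c - 4*N*bb) * hP1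
  have h' : 0 < x * (bb*c + x*(bb*d) - x*(c*c)) := mul_pos hx (by linarith)
  have hQ : 0 < (2*N+x^2)*bb^2 + (2*N-1)*(x*(bb*a)) - x^2*a^2 := by
    rw [hid]
    calc (0:ℝ) < x*(bb*c + x*(bb*d) - x*(c*c)) := h'
    _ = x*(bb*c) + x^2*(bb*d) - x^2*(c*c) := by ring
  -- the square root
  set s : ℝ := Real.sqrt ((N+1/2)^2+x^2) with hsdef
  have hs2 : s^2 = (N+1/2)^2+x^2 := Real.sq_sqrt (by positivity)
  have hsge : N+1/2 ≤ s := by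
    rw [hsdef]
    have h9 : N+1/2 = Real.sqrt ((N+1/2)^2) := (Real.sqrt_sq (by linarith)).symm
    rw [h9]
    exact Real.sqrt_le_sqrt (by nlinarith [sq_nonneg x])
  set D : ℝ := N - 1/2 + s with hDdef
  have hD : 0 < D := by rw [hDdef]; linarith
  have hroot : D^2 - (2*N-1)*D - (2*N+x^2) = 0 := by
    rw [hDdef]; linear_combination hs2
  -- conclude x * a < D * bb
  have hfin : x * a < D * bb := by
    by_contra hcon
    push_neg at hcon
    have hkey : (D*bb)*(D*bb - (2*N-1)*bb) ≤ (x*a)*((x*a) - (2*N-1)*bb) := by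
      have hf1 : D*bb - (2*N-1)*bb ≤ x*a - (2*N-1)*bb := by linarith
      have hDge : (2*N-1) ≤ D := by rw [hDdef]; linarith
      have hf2' : (0:ℝ) ≤ (D - (2*N-1))*bb := mul_nonneg (by linarith) hb.le
      have heq : (D - (2*N-1))*bb = D*bb - (2*N-1)*bb := by ring
      rw [heq] at hf2'
      exact mul_le_mul hcon hf1 hf2' (by positivity)
    have hexp2 : (D*bb)*(D*bb - (2*N-1)*bb) = (2*N+x^2)*bb^2 := by
      linear_combination bb^2 * hroot
    have hrhs : (x*a)*((x*a) - (2*N-1)*bb) = x^2*a^2 - (2*N-1)*(x*(bb*a)) := by ring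
    rw [hexp2, hrhs] at hkey
    linarith
  have hDeq : D = (ν:ℝ)+1/2 + Real.sqrt (((ν:ℝ)+3/2)^2+x^2) := by
    rw [hDdef, hsdef, hN]
    have harg : ((ν:ℝ)+1+1/2)^2+x^2 = ((ν:ℝ)+3/2)^2+x^2 := by ring
    rw [harg]
    ring
  rw [← hDeq]
  exact hfin

lemma upper_aux (ν : ℕ) (x : ℝ) (hx : 0 < x) :
    ((ν:ℝ) + Real.sqrt (((ν:ℝ)+2)^2+x^2)) * besselI (ν+1) x < x * besselI ν x := by
  have hν : (0:ℝ) ≤ (ν:ℝ) := Nat.cast_nonneg ν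
  have ha : 0 < besselI ν x := besselI_pos ν hx
  have hb : 0 < besselI (ν+1) x := besselI_pos (ν+1) hx
  have hcp : 0 < besselI (ν+2) x := besselI_pos (ν+2) hx
  obtain ⟨a, hadef⟩ : ∃ a, besselI ν x = a := ⟨_, rfl⟩
  obtain ⟨bb, hbdef⟩ : ∃ bb, besselI (ν+1) x = bb := ⟨_, rfl⟩
  obtain ⟨c, hcdef⟩ : ∃ c, besselI (ν+2) x = c := ⟨_, rfl⟩
  rw [hadef] at ha
  rw [hbdef] at hb
  rw [hcdef] at hcp
  have hrec : x * a = x * c + (2*(ν:ℝ)+2)*bb := by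
    have := besselI_rec ν x
    rw [hadef, hbdef, hcdef] at this
    exact this
  have hlow2 := lower_aux (ν+1) x hx
  have e2 : ν+1+1 = ν+2 := rfl
  rw [e2, hbdef, hcdef] at hlow2
  push_cast at hlow2
  -- hlow2 : x * bb < (ν+1+1/2 + sqrt((ν+1+3/2)^2+x^2)) * c
  obtain ⟨sC, hsCdef⟩ : ∃ s, Real.sqrt (((ν:ℝ)+1+3/2)^2+x^2) = s := ⟨_, rfl⟩
  have hsC2 : sC^2 = ((ν:ℝ)+1+3/2)^2+x^2 := by rw [← hsCdef]; exact Real.sq_sqrt (by positivity)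
  have hsCge : (ν:ℝ)+1+3/2 ≤ sC := by
    rw [← hsCdef]
    have h9 : (ν:ℝ)+1+3/2 = Real.sqrt (((ν:ℝ)+1+3/2)^2) := (Real.sqrt_sq (by linarith)).symm
    nth_rewrite 1 [h9]
    exact Real.sqrt_le_sqrt (by nlinarith [sq_nonneg x])
  rw [hsCdef] at hlow2
  obtain ⟨D', hD'def⟩ : ∃ d, (ν:ℝ)+1+1/2+sC = d := ⟨_, rfl⟩
  have hD' : 0 < D' := by rw [← hD'def]; linarith
  rw [hD'def] at hlow2
  -- root property: D'^2 - 2(ν+2) D' - x^2 = (ν+1+3/2) - sC ≤ 0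
  have hqle : D'^2 ≤ 2*(ν:ℝ)*D' + 4*D' + x^2 := by
    have hq : D'^2 - 2*(ν:ℝ)*D' - 4*D' - x^2 = ((ν:ℝ)+1+3/2) - sC := by
      rw [← hD'def]; linear_combination hsC2
    linarith
  obtain ⟨w, hw0, hw⟩ : ∃ w : ℝ, 0 ≤ w ∧ w * D' = x^2 :=
    ⟨x^2/D', by positivity, div_mul_cancel₀ _ hD'.ne'⟩
  have hDle : D' ≤ 2*(ν:ℝ)+4+w := by
    have h1 : D'*D' ≤ (2*(ν:ℝ)+4+w)*D' := by nlinarith [hqle, hw]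
    exact le_of_mul_le_mul_right h1 hD'
  have h9 : ((ν:ℝ)+2)^2+x^2 ≤ ((ν:ℝ)+2+w)^2 := by
    have hprod : 0 ≤ w * (2*(ν:ℝ)+4+w-D') := mul_nonneg hw0 (by linarith)
    nlinarith [hprod, hw]
  have hsq : Real.sqrt (((ν:ℝ)+2)^2+x^2) ≤ (ν:ℝ)+2+w := by
    have h10 : Real.sqrt (((ν:ℝ)+2)^2+x^2) ≤ Real.sqrt ((((ν:ℝ)+2+w))^2) := Real.sqrt_le_sqrt h9
    rwa [Real.sqrt_sq (by linarith)] at h10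
  -- chain
  have hc2 : x^2*bb < D'*(x*c) := by nlinarith [mul_lt_mul_of_pos_left hlow2 hx]
  have h12 : D'*(x*a) = D'*(x*c) + (2*(ν:ℝ)+2)*(D'*bb) := by linear_combination D' * hrec
  have h13 : D'*(bb*(2*(ν:ℝ)+2+w)) = x^2*bb + (2*(ν:ℝ)+2)*(D'*bb) := by
    linear_combination bb * hw
  have h11 : D'*(bb*(2*(ν:ℝ)+2+w)) < D'*(x*a) := by linarith
  have h14 : bb*(2*(ν:ℝ)+2+w) < x*a := lt_of_mul_lt_mul_left h11 hD'.le
  have h15 : ((ν:ℝ) + Real.sqrt (((ν:ℝ)+2)^2+x^2)) * bb ≤ (2*(ν:ℝ)+2+w) * bb :=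
    mul_le_mul_of_nonneg_right (by linarith) hb.le
  rw [hadef, hbdef]
  have hcomm : bb*(2*(ν:ℝ)+2+w) = (2*(ν:ℝ)+2+w)*bb := mul_comm _ _
  linarith


end BesselAux

open BesselAux in
/-- For every integer `n ≥ 1` and every `x > 0`,
`x / (n - 1/2 + √((n + 1/2)² + x²)) < I_n(x)/I_{n-1}(x) < x / (n - 1 + √((n + 1)² + x²))`. -/
theorem besselI_ratio_bounds (n : ℕ) (hn : 1 ≤ n) (x : ℝ) (hx : 0 < x) :
    x / ((n : ℝ) - 1 / 2 + Real.sqrt (((n : ℝ) + 1 / 2) ^ 2 + x ^ 2)) <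
        besselI n x / besselI (n - 1) x ∧
      besselI n x / besselI (n - 1) x <
        x / ((n : ℝ) - 1 + Real.sqrt (((n : ℝ) + 1) ^ 2 + x ^ 2)) := by
  obtain ⟨ν, rfl⟩ : ∃ ν, n = ν + 1 := ⟨n - 1, by omega⟩
  simp only [Nat.add_sub_cancel]
  have hν : (0:ℝ) ≤ (ν:ℝ) := Nat.cast_nonneg ν
  have ha : 0 < besselI ν x := besselI_pos ν hx
  have hb : 0 < besselI (ν+1) x := besselI_pos (ν+1) hx
  have hlow := lower_aux ν x hx
  have hupp := upper_aux ν x hx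
  obtain ⟨a, hadef⟩ : ∃ a, besselI ν x = a := ⟨_, rfl⟩
  obtain ⟨bb, hbdef⟩ : ∃ bb, besselI (ν+1) x = bb := ⟨_, rfl⟩
  rw [hadef] at ha hlow hupp
  rw [hbdef] at hb hlow hupp
  rw [hadef, hbdef]
  push_cast
  constructor
  · -- lower bound
    have hDeq : ((ν:ℝ)+1-1/2) + Real.sqrt (((ν:ℝ)+1+1/2)^2+x^2)
        = (ν:ℝ)+1/2 + Real.sqrt (((ν:ℝ)+3/2)^2+x^2) := by
      have harg : ((ν:ℝ)+1+1/2)^2+x^2 = ((ν:ℝ)+3/2)^2+x^2 := by ring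
      rw [harg]; ring
    have hD : 0 < ((ν:ℝ)+1-1/2) + Real.sqrt (((ν:ℝ)+1+1/2)^2+x^2) := by
      have := Real.sqrt_nonneg (((ν:ℝ)+1+1/2)^2+x^2)
      linarith
    rw [div_lt_div_iff₀ hD ha]
    rw [hDeq]
    have hcomm : ((ν:ℝ)+1/2 + Real.sqrt (((ν:ℝ)+3/2)^2+x^2)) * bb
        = bb * ((ν:ℝ)+1/2 + Real.sqrt (((ν:ℝ)+3/2)^2+x^2)) := mul_comm _ _
    linarith
  · -- upper bound
    have hDeq : ((ν:ℝ)+1-1) + Real.sqrt (((ν:ℝ)+1+1)^2+x^2)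
        = (ν:ℝ) + Real.sqrt (((ν:ℝ)+2)^2+x^2) := by
      have harg : ((ν:ℝ)+1+1)^2+x^2 = ((ν:ℝ)+2)^2+x^2 := by ring
      rw [harg]; ring
    have hD : 0 < ((ν:ℝ)+1-1) + Real.sqrt (((ν:ℝ)+1+1)^2+x^2) := by
      have := Real.sqrt_pos.mpr (show (0:ℝ) < ((ν:ℝ)+1+1)^2+x^2 by positivity)
      linarith
    rw [div_lt_div_iff₀ ha hD]
    rw [hDeq]
    have hcomm : bb * ((ν:ℝ) + Real.sqrt (((ν:ℝ)+2)^2+x^2))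
        = ((ν:ℝ) + Real.sqrt (((ν:ℝ)+2)^2+x^2)) * bb := mul_comm _ _
    linarith
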